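/- Worst-case ℓ₁ rate bound at the optimal scaling: Let f(x) = exp(−2|x|) be the Laplacian, extended multiplicatively to ℝ². For any δ > 0 and any prime q, define D(δ) := √(1 + 1/δ²) + 1/δ > 1 and set s := 4/ln(D(δ)). Then W^(1)_{q,δ}(s)² := exp(−4δ/s)/f_s(L_q) > ((D(δ) − 1)/(D(δ) + 1)) · E(q·ln(D(δ))/4) / D(δ)^δ, where L_q := ∪_{z∈ℤ}((z,z) + qℤ²) and E(x) := (coth(x) + 4x·e^{2x}/(e^{2x} − 1)²)^{-1}. -/

import Mathlib

noncomputable section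

/-- The Laplacian function `f(x) = exp(-2|x|)`. -/
def lap (x : ℝ) : ℝ := Real.exp (-2 * |x|)

/-- The lattice `L_q = ∪_{z∈ℤ} ((z,z) + qℤ²) ⊂ ℝ²`. -/
def LqSet (q : ℕ) : Set (ℝ × ℝ) :=
  {v | ∃ z w₁ w₂ : ℤ, v.1 = z + q * w₁ ∧ v.2 = z + q * w₂}

/-- `f_s(L_q)`: the sum over `L_q` of the multiplicative extension of `f` to `ℝ²`,
scaled by `s` (i.e. `f_s(x) = f(x/s)`). -/
def fsLq (f : ℝ → ℝ) (s : ℝ) (q : ℕ) : ℝ :=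
  ∑' v : LqSet q, f ((v : ℝ × ℝ).1 / s) * f ((v : ℝ × ℝ).2 / s)

/-- `coth x = (e^x + e^{-x})/(e^x - e^{-x})`. -/
def coth' (x : ℝ) : ℝ := (Real.exp x + Real.exp (-x)) / (Real.exp x - Real.exp (-x))

/-- The "fudge factor" `E(x) = (coth(x) + 4x·e^{2x}/(e^{2x} − 1)²)⁻¹`. -/
def El (x : ℝ) : ℝ :=
  (coth' x + 4 * x * Real.exp (2 * x) / (Real.exp (2 * x) - 1) ^ 2)⁻¹

/-- `D(δ) = √(1 + 1/δ²) + 1/δ`. -/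
def Dd (δ : ℝ) : ℝ := Real.sqrt (1 + 1 / δ ^ 2) + 1 / δ

/-!
With `r = e^{-2/s}` one has `f(a/s) = r^{|a|}` on integers, and `L_q` is the disjoint union over
residues `c < q` of `(c, c) + qℤ²`. Each residue class contributes the square of a two-sided
geometric series, `((r^c + r^{q-c}) / (1 - r^q))²`, so `f_s(L_q)` is an explicit rational function
of `x = r²` and `R = r^q`, and so is `E(q/s) = (1 - R)² / (1 - R² + 4qR/s)`. Since `D = e^{4/s}`
and `exp(-4δ/s) = D^{-δ}`, the claim reduces to `2(1 - x)/(1 + x) < 4/s`, that is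
`tanh(2/s) < 2/s`.
-/

open Real Finset

theorem two_mul_one_sub_exp_neg_lt {L : ℝ} (hL : 0 < L) :
    2 * (1 - exp (-L)) < (1 + exp (-L)) * L := by
  let h : ℝ → ℝ := fun x => (2 + x) * exp (-x) + x - 2
  have hderiv (x : ℝ) : HasDerivAt h (1 - (1 + x) * exp (-x)) x :=
    ((((hasDerivAt_id x).const_add 2).mul (hasDerivAt_neg x).exp).add (hasDerivAt_id x)
      |>.sub_const 2).congr_deriv (by simp only [id]; ring)
  have hmono : StrictMonoOn h (Set.Ici 0) := by
    refine strictMonoOn_of_deriv_pos (convex_Ici 0) (by fun_prop) fun x hx => ?_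
    rw [interior_Ici, Set.mem_Ioi] at hx
    have : (1 + x) * exp (-x) < 1 := by
      rw [exp_neg, ← div_eq_mul_inv, div_lt_one (exp_pos x)]
      linarith [add_one_lt_exp hx.ne']
    rw [(hderiv x).deriv]
    linarith
  have := hmono Set.self_mem_Ici hL.le hL
  simp only [h, neg_zero, exp_zero] at this
  linarith

theorem hasSum_pow_natAbs_add_mul {r : ℝ} (h0 : 0 ≤ r) (h1 : r < 1) {q c : ℕ} (hc : c < q) :
    HasSum (fun k : ℤ => r ^ ((c : ℤ) + q * k).natAbs)
      ((r ^ c + r ^ (q - c)) / (1 - r ^ q)) := by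
  have hgeo : HasSum (fun n : ℕ => (r ^ q) ^ n) (1 - r ^ q)⁻¹ :=
    hasSum_geometric_of_lt_one (by positivity) (pow_lt_one₀ h0 h1 (by omega))
  rw [add_div, div_eq_mul_inv, div_eq_mul_inv]
  refine HasSum.of_nat_of_neg_add_one ((hgeo.mul_left (r ^ c)).congr_fun fun n => ?_)
    ((hgeo.mul_left (r ^ (q - c))).congr_fun fun n => ?_)
  · rw [← pow_mul, ← pow_add]
    congr 1
  · rw [← pow_mul, ← pow_add]
    congr 1
    rw [mul_neg, mul_add, mul_one]
    omega

theorem hasSum_prod_of_fintype {α ι κ : Type*} [AddCommMonoid α] [TopologicalSpace α]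
    [ContinuousAdd α] [Fintype ι] {f : ι × κ → α} {g : ι → α}
    (h : ∀ i, HasSum (fun k => f (i, k)) (g i)) : HasSum f (∑ i, g i) := by
  classical
  have hfiber (i : ι) : HasSum (fun p : ι × κ => if p.1 = i then f p else 0) (g i) := by
    refine ((Prod.mk_right_injective i).hasSum_iff fun p hp => ?_).mp
      (by simpa [Function.comp_def] using h i)
    simp only [ite_eq_right_iff]
    rintro rfl
    exact absurd ⟨p.2, rfl⟩ hp
  simpa using hasSum_sum fun i (_ : i ∈ univ) => hfiber i

theorem sum_range_sq_pow_add_pow_sub {r : ℝ} (hr : r ^ 2 ≠ 1) (q : ℕ) :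
    ∑ c ∈ range q, (r ^ c + r ^ (q - c)) ^ 2
      = (1 + r ^ 2) * (1 - r ^ (2 * q)) / (1 - r ^ 2) + 2 * q * r ^ q := by
  have hsq (c : ℕ) (hc : c ∈ range q) :
      (r ^ c + r ^ (q - c)) ^ 2 = (r ^ 2) ^ c + r ^ 2 * (r ^ 2) ^ (q - 1 - c) + 2 * r ^ q := by
    obtain ⟨d, rfl⟩ := Nat.exists_eq_add_of_lt (mem_range.mp hc)
    rw [show c + d + 1 - c = d + 1 by omega, show c + d + 1 - 1 - c = d by omega]
    ring
  have hgeom : ∑ c ∈ range q, (r ^ 2) ^ c = (1 - r ^ (2 * q)) / (1 - r ^ 2) := by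
    rw [eq_div_iff (sub_ne_zero.mpr hr.symm), geom_sum_mul_neg, pow_mul]
  rw [sum_congr rfl hsq, sum_add_distrib, sum_add_distrib, ← mul_sum,
    sum_range_reflect (fun c => (r ^ 2) ^ c) q, hgeom, sum_const, card_range, nsmul_eq_mul]
  ring

theorem El_eq_of_pos {t : ℝ} (ht : 0 < t) :
    El t = (1 - exp (-2 * t)) ^ 2 / ((1 - exp (-2 * t) ^ 2) + 4 * t * exp (-2 * t)) := by
  have hu : 1 < exp t := one_lt_exp_iff.mpr ht
  have h2 : exp (2 * t) = exp t ^ 2 := by rw [← exp_nat_mul]; norm_num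
  have hm2 : exp (-2 * t) = (exp t ^ 2)⁻¹ := by rw [neg_mul, exp_neg, h2]
  have hsub : exp t - (exp t)⁻¹ ≠ 0 := by
    rw [sub_ne_zero]; exact (inv_lt_one_of_one_lt₀ hu).trans hu |>.ne'
  have hsq : exp t ^ 2 - 1 ≠ 0 := by nlinarith
  rw [El, coth', exp_neg, h2, hm2, ← one_div]
  field_simp
  ring

theorem one_lt_Dd {δ : ℝ} (hδ : 0 < δ) : 1 < Dd δ := by
  have : 1 < √(1 + 1 / δ ^ 2) := by
    rw [lt_sqrt zero_le_one, one_pow, lt_add_iff_pos_right]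
    positivity
  rw [Dd]; linarith [one_div_pos.mpr hδ]

def lqParam (q : ℕ) (p : Fin q × ℤ × ℤ) : ℝ × ℝ :=
  ((((p.1 : ℕ) + q * p.2.1 : ℤ) : ℝ), (((p.1 : ℕ) + q * p.2.2 : ℤ) : ℝ))

theorem lqParam_injective (q : ℕ) : Function.Injective (lqParam q) := by
  rintro ⟨c, m, n⟩ ⟨c', m', n'⟩ h
  simp only [lqParam, Prod.mk.injEq, Int.cast_inj] at h
  obtain ⟨hm, hn⟩ := h
  have hc : c = c' := by
    have := congrArg (· % (q : ℤ)) hm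
    simp only [Int.add_mul_emod_self_left] at this
    rwa [Int.emod_eq_of_lt (by positivity) (by exact_mod_cast c.isLt),
      Int.emod_eq_of_lt (by positivity) (by exact_mod_cast c'.isLt), Nat.cast_inj,
      Fin.val_inj] at this
  subst hc
  have hq : (q : ℤ) ≠ 0 := by exact_mod_cast c.pos.ne'
  simp only [add_right_inj, mul_right_inj' hq] at hm hn
  rw [hm, hn]

theorem range_lqParam {q : ℕ} (hq : 0 < q) : Set.range (lqParam q) = LqSet q := by
  ext ⟨v₁, v₂⟩
  constructor
  · rintro ⟨⟨c, m, n⟩, h⟩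
    simp only [lqParam, Prod.mk.injEq] at h
    obtain ⟨rfl, rfl⟩ := h
    exact ⟨c, m, n, by push_cast; rfl, by push_cast; rfl⟩
  · rintro ⟨z, w₁, w₂, rfl, rfl⟩
    have hq' : (0 : ℤ) < q := by exact_mod_cast hq
    have hc : (z % q).toNat < q := by have := Int.emod_lt_of_pos z hq'; omega
    refine ⟨(⟨(z % q).toNat, hc⟩, z / q + w₁, z / q + w₂), ?_⟩
    have hz : ((z % q).toNat : ℤ) = z - q * (z / q) := by
      rw [Int.toNat_of_nonneg (Int.emod_nonneg z hq'.ne'), Int.emod_def]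
    simp only [lqParam, hz]
    push_cast
    ring_nf

theorem lap_intCast_div {s : ℝ} (hs : 0 < s) (a : ℤ) :
    lap (a / s) = exp (-(2 / s)) ^ a.natAbs := by
  rw [lap, ← exp_nat_mul, abs_div, abs_of_pos hs, Nat.cast_natAbs, Int.cast_abs]
  congr 1
  ring

theorem fsLq_eq_sum_range {f : ℝ → ℝ} {s r : ℝ} {q : ℕ} (hq : 0 < q) (h0 : 0 ≤ r)
    (h1 : r < 1)
    (hf : ∀ a : ℤ, f (a / s) = r ^ a.natAbs) :
    fsLq f s q = ∑ c ∈ range q, ((r ^ c + r ^ (q - c)) / (1 - r ^ q)) ^ 2 := by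
  have hfiber (c : Fin q) : HasSum
      (fun p : ℤ × ℤ =>
        r ^ ((c : ℕ) + q * p.1 : ℤ).natAbs * r ^ ((c : ℕ) + q * p.2 : ℤ).natAbs)
      (((r ^ (c : ℕ) + r ^ (q - (c : ℕ))) / (1 - r ^ q)) ^ 2) := by
    have hW := hasSum_pow_natAbs_add_mul h0 h1 c.isLt
    have hS := hW.summable.mul_of_nonneg hW.summable (fun _ => by positivity)
      (fun _ => by positivity)
    simpa only [sq] using hW.mul hW hS
  have hLq : HasSum (fun v : LqSet q => f ((v : ℝ × ℝ).1 / s) * f ((v : ℝ × ℝ).2 / s))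
      (∑ c : Fin q, ((r ^ (c : ℕ) + r ^ (q - (c : ℕ))) / (1 - r ^ q)) ^ 2) := by
    rw [← range_lqParam hq]
    refine ((lqParam_injective q).hasSum_range_iff
      (f := fun v : ℝ × ℝ => f (v.1 / s) * f (v.2 / s))).mpr ?_
    simpa only [Function.comp_def, lqParam, hf] using hasSum_prod_of_fintype
      (f := fun p : Fin q × ℤ × ℤ => r ^ ((p.1 : ℕ) + q * p.2.1 : ℤ).natAbs
        * r ^ ((p.1 : ℕ) + q * p.2.2 : ℤ).natAbs) hfiber
  rw [fsLq, hLq.tsum_eq,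
    Fin.sum_univ_eq_sum_range (fun c => ((r ^ c + r ^ (q - c)) / (1 - r ^ q)) ^ 2)]

theorem tanh_mul_El_lt_inv_fsLq_lap {s : ℝ} (hs : 0 < s) {q : ℕ} (hq : 0 < q) :
    (exp (4 / s) - 1) / (exp (4 / s) + 1) * El (q / s) < (fsLq lap s q)⁻¹ := by
  set r := exp (-(2 / s))
  have hr0 : 0 < r := exp_pos _
  have hr1 : r < 1 := exp_lt_one_iff.mpr (by simp [hs])
  have hx : r ^ 2 = exp (-(4 / s)) := by rw [← exp_nat_mul]; ring_nf
  have hR : exp (-2 * (q / s)) = r ^ q := by rw [← exp_nat_mul]; ring_nf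
  have hD : exp (4 / s) = (r ^ 2)⁻¹ := by rw [hx, exp_neg, inv_inv]
  have hkey : 2 * (1 - r ^ 2) < (1 + r ^ 2) * (4 / s) :=
    hx ▸ two_mul_one_sub_exp_neg_lt (by positivity)
  have hx1 : r ^ 2 < 1 := pow_lt_one₀ hr0.le hr1 two_ne_zero
  have hR1 : r ^ q < 1 := pow_lt_one₀ hr0.le hr1 hq.ne'
  rw [fsLq_eq_sum_range hq hr0.le hr1 (lap_intCast_div hs), El_eq_of_pos (by positivity), hR, hD]
  simp only [div_pow]
  rw [← sum_div, sum_range_sq_pow_add_pow_sub hx1.ne, mul_comm 2 q, pow_mul]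
  set x := r ^ 2
  set R := r ^ q
  have hx0 : 0 < x := by positivity
  have hR0 : 0 < R := by positivity
  have hR2 : R ^ 2 < 1 := by nlinarith
  have hq' : (0 : ℝ) < q := by exact_mod_cast hq
  have h1x : 1 - x ≠ 0 := by linarith
  have h1R : 1 - R ≠ 0 := by linarith
  have hE : 0 < (1 - R ^ 2) + 4 * (q / s) * R := by positivity
  have hN : 0 < (1 + x) * (1 - R ^ 2) / (1 - x) + 2 * q * R := by
    have : 0 < 1 - x := by linarith
    positivity
  rw [inv_div, lt_div_iff₀ hN]
  calc _ = (1 - R) ^ 2 * (((1 + x) * (1 - R ^ 2) + 2 * q * R * (1 - x))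
        / ((1 + x) * ((1 - R ^ 2) + 4 * (q / s) * R))) := by
        field_simp
    _ < (1 - R) ^ 2 := by
        refine mul_lt_of_lt_one_right (by positivity) ?_
        rw [div_lt_one (by positivity)]
        linear_combination (mul_lt_mul_of_pos_right hkey (mul_pos hq' hR0))

/-- Worst-case ℓ₁ rate bound at the optimal scaling `s = 4/ln(D(δ))`:
`W^(1)_{q,δ}(s)² = exp(−4δ/s)/f_s(L_q) > ((D(δ)−1)/(D(δ)+1))·E(q·ln(D(δ))/4)/D(δ)^δ`. -/
theorem worst_case_ell1_rate (δ : ℝ) (hδ : 0 < δ) (q : ℕ) (hq : Nat.Prime q)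
    (s : ℝ) (hs : s = 4 / Real.log (Dd δ)) :
    Real.exp (-4 * δ / s) / fsLq lap s q >
      (Dd δ - 1) / (Dd δ + 1) * El (q * Real.log (Dd δ) / 4) / Dd δ ^ δ := by
  have hD : 1 < Dd δ := one_lt_Dd hδ
  have hL : 0 < log (Dd δ) := log_pos hD
  have hs0 : 0 < s := hs ▸ div_pos four_pos hL
  have hlog : log (Dd δ) = 4 / s := by rw [hs, div_div_cancel₀ four_ne_zero]
  have hDexp : Dd δ = exp (4 / s) := by rw [← hlog, exp_log (by linarith)]
  have hpow : Dd δ ^ δ = (exp (-4 * δ / s))⁻¹ := by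
    rw [hDexp, ← exp_mul, ← exp_neg]
    ring_nf
  rw [hpow, hlog, show (q : ℝ) * (4 / s) / 4 = q / s by ring, hDexp, div_inv_eq_mul, gt_iff_lt,
    div_eq_mul_inv (exp _), mul_comm (exp _)]
  exact mul_lt_mul_of_pos_right (tanh_mul_El_lt_inv_fsLq_lap hs0 hq.pos) (exp_pos _)

end
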